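/- arXiv:0911.2894 — 6 statements merged into one kernel-verified Lean document; each statement's English description precedes it below -/
import Mathlib

section
/- Let k be an infinite field, let f ∈ k[u,v] be a nondegenerate binary form of degree d ≥ 1 (its image over an algebraic closure of k is squarefree), let F be a field extension of k, let m ≥ 1, and let α_u, α_v be m × m matrices over F such that (a•α_u + b•α_v)^d = f(a,b)•1 for all a, b ∈ k (where f(a,b) ∈ k acts on matrices over F via the algebra map k → F). Then d divides m. -/
/-!
Put `p(x) = f(x, 1)`. Taking determinants in the Clifford relation at `(a, 1)` gives
`det(x αu + αv)^d = p(x)^m` in `F[x]`, as both sides agree at every `x ∈ k`. A repeated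
linear factor of `p` over `k̄` would homogenize to a repeated linear factor of `f`, and for
`d ≥ 2` a constant `p` would force `v² ∣ f`; so `p` is separable and nonconstant, hence
squarefree and not a unit in `F[x]`. Comparing the multiplicity of an irreducible factor of
`p` on both sides gives `d ∣ m`.
-/

theorem dvd_of_pow_eq_pow_of_squarefree {α : Type*} [CommMonoidWithZero α]
    [UniqueFactorizationMonoid α] {a b : α} {d m : ℕ} (hb : Squarefree b) (hbu : ¬IsUnit b)
    (h : a ^ d = b ^ m) : d ∣ m := by
  have : Nontrivial α := ⟨⟨b, 1, fun h => hbu (h ▸ isUnit_one)⟩⟩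
  obtain ⟨p, hp, hpb⟩ := WfDvdMonoid.exists_irreducible_factor hbu hb.ne_zero
  have hb_mult : emultiplicity p b = 1 :=
    le_antisymm (((squarefree_iff_emultiplicity_le_one b).1 hb p).resolve_right hp.not_isUnit)
      (Order.one_le_iff_pos.2 (emultiplicity_pos_of_dvd hpb))
  have hmult := congrArg (emultiplicity p) h
  rw [emultiplicity_pow hp.prime, emultiplicity_pow hp.prime, hb_mult, mul_one] at hmult
  cases ha_mult : emultiplicity p a with
  | top =>
    rw [ha_mult] at hmult
    obtain rfl | hd := eq_or_ne d 0
    · rw [Nat.cast_zero, zero_mul] at hmult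
      rw [← Nat.cast_inj.1 hmult]
    · rw [ENat.mul_top (by exact_mod_cast hd)] at hmult
      exact absurd hmult.symm (ENat.natCast_ne_top m)
  | coe e =>
    rw [ha_mult] at hmult
    exact ⟨e, by exact_mod_cast hmult.symm⟩

open Polynomial

theorem MvPolynomial.IsHomogeneous.not_isUnit {σ R : Type*} [CommRing R] [IsReduced R]
    [Nontrivial R] {φ : MvPolynomial σ R} {n : ℕ} (hφ : φ.IsHomogeneous n) (hn : n ≠ 0) :
    ¬IsUnit φ := fun hu =>
  hn ((hφ.totalDegree hu.ne_zero).symm.trans (isUnit_iff_totalDegree_of_isReduced.1 hu).2)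

section Dehomogenize

open MvPolynomial

variable {R : Type*} [CommRing R] {f : MvPolynomial (Fin 2) R} {n : ℕ}

theorem eval_aeval_X_one (f : MvPolynomial (Fin 2) R) (a : R) :
    (aeval ![(X : R[X]), 1] f).eval a = eval ![a, 1] f := by
  rw [← Polynomial.coe_aeval_eq_eval, ← AlgHom.comp_apply, comp_aeval,
    ← MvPolynomial.coe_aeval_eq_eval]
  exact congrArg (MvPolynomial.aeval · f) (_root_.funext fun i => by fin_cases i <;> simp)

theorem natDegree_aeval_X_one_le (hf : f.IsHomogeneous n) :
    (aeval ![(X : R[X]), 1] f).natDegree ≤ n := by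
  rw [f.as_sum, map_sum]
  refine natDegree_sum_le_of_forall_le _ _ fun m hm => ?_
  have hm : m 0 + m 1 = n := by
    simpa [Finsupp.weight_apply, Finsupp.sum_fintype] using hf (mem_support_iff.1 hm)
  rw [MvPolynomial.aeval_monomial, Finsupp.prod_fintype _ _ (fun _ => pow_zero _),
    Fin.prod_univ_two]
  simp only [Matrix.cons_val_zero, Matrix.cons_val_one, one_pow, mul_one]
  exact (natDegree_C_mul_X_pow_le _ _).trans (by omega)

theorem map_aeval_X_one {S : Type*} [CommRing S] (φ : R →+* S) (hf : f.IsHomogeneous n) :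
    (aeval ![(X : R[X]), 1] f).map φ = aeval ![(X : S[X]), 1] (MvPolynomial.map φ f) := by
  conv_rhs => rw [← homogenize_eq_of_isHomogeneous hf rfl, ← homogenize_map]
  rw [aeval_homogenize_X_one _ ((natDegree_map_le).trans (natDegree_aeval_X_one_le hf))]

theorem mul_self_mul_ne_aeval_X_one [IsDomain R] (hf : f.IsHomogeneous n) (hsf : Squarefree f)
    {r q : R[X]} (hr : r.natDegree ≤ 1) (hq : q.natDegree + 2 ≤ n) :
    r * r * q ≠ aeval ![(X : R[X]), 1] f := by
  intro h
  obtain ⟨e, rfl⟩ : ∃ e, n = 1 + 1 + e := ⟨n - 2, by omega⟩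
  have hfac : f = r.homogenize 1 * r.homogenize 1 * q.homogenize e := by
    rw [← homogenize_eq_of_isHomogeneous hf h.symm,
      homogenize_mul _ _ (natDegree_mul_le.trans (add_le_add hr hr)) (by omega),
      homogenize_mul _ _ hr hr]
  exact (isHomogeneous_homogenize r).not_isUnit one_ne_zero (hsf _ ⟨_, hfac⟩)

theorem natDegree_aeval_X_one_pos [IsDomain R] (hf : f.IsHomogeneous n) (hsf : Squarefree f)
    (hn : 2 ≤ n) : 0 < (aeval ![(X : R[X]), 1] f).natDegree := by
  set p := aeval ![(X : R[X]), 1] f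
  by_contra! h0
  refine mul_self_mul_ne_aeval_X_one hf hsf (r := 1) (q := C (p.coeff 0)) (by simp)
    (by simpa using hn) ?_
  rw [one_mul, one_mul]
  exact (eq_C_of_natDegree_eq_zero (Nat.le_zero.1 h0)).symm

theorem squarefree_aeval_X_one {K : Type*} [Field K] [IsAlgClosed K]
    {f : MvPolynomial (Fin 2) K} (hf : f.IsHomogeneous n) (hsf : Squarefree f) :
    Squarefree (aeval ![(X : K[X]), 1] f) := by
  have hp0 : aeval ![(X : K[X]), 1] f ≠ 0 := fun h =>
    hsf.ne_zero (by rw [← homogenize_eq_of_isHomogeneous hf h, homogenize_zero])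
  rw [squarefree_iff_irreducible_sq_not_dvd_of_ne_zero hp0]
  rintro r hr ⟨q, hq⟩
  have hr1 : r.natDegree = 1 :=
    natDegree_eq_of_degree_eq_some (IsAlgClosed.degree_eq_one_of_irreducible K hr)
  have hq0 : q ≠ 0 := by rintro rfl; exact hp0 (by rw [hq, mul_zero])
  have hdeg := natDegree_aeval_X_one_le hf
  rw [hq, natDegree_mul (mul_ne_zero hr.ne_zero hr.ne_zero) hq0,
    natDegree_mul hr.ne_zero hr.ne_zero, hr1] at hdeg
  exact mul_self_mul_ne_aeval_X_one hf hsf hr1.le (by omega) hq.symm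

theorem separable_aeval_X_one {k : Type*} [Field k] {f : MvPolynomial (Fin 2) k}
    (hf : f.IsHomogeneous n) (hsf : Squarefree (map (algebraMap k (AlgebraicClosure k)) f)) :
    (aeval ![(X : k[X]), 1] f).Separable := by
  rw [← separable_map (algebraMap k (AlgebraicClosure k)), map_aeval_X_one _ hf,
    PerfectField.separable_iff_squarefree]
  exact squarefree_aeval_X_one (hf.map _) hsf

end Dehomogenize

theorem eval_det_X_smul_add {F ι : Type*} [CommRing F] [Fintype ι] [DecidableEq ι]
    (A B : Matrix ι ι F) (x : F) :
    (Matrix.det ((X : F[X]) • A.map C + B.map C)).eval x = Matrix.det (x • A + B) := by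
  rw [← coe_evalRingHom, RingHom.map_det]
  congr 1
  ext i j
  simp only [RingHom.mapMatrix_apply, Matrix.map_apply, Matrix.add_apply, Matrix.smul_apply,
    smul_eq_mul, coe_evalRingHom, eval_add, eval_mul, eval_X, eval_C]

theorem det_X_smul_add_pow_eq {k F ι : Type*} [Field k] [Infinite k] [Field F] [Algebra k F]
    [Fintype ι] [DecidableEq ι] {d : ℕ} (A B : Matrix ι ι F) (p : k[X])
    (h : ∀ a : k, (algebraMap k F a • A + B) ^ d = algebraMap k F (p.eval a) • 1) :
    Matrix.det ((X : F[X]) • A.map C + B.map C) ^ d =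
      p.map (algebraMap k F) ^ Fintype.card ι := by
  refine eq_of_infinite_eval_eq _ _ ((Set.infinite_range_of_injective
    (algebraMap k F).injective).mono ?_)
  rintro _ ⟨a, rfl⟩
  rw [Set.mem_ofPred_eq, eval_pow, eval_det_X_smul_add, ← Matrix.det_pow, h, eval_pow,
    eval_map_algebraMap, Matrix.det_smul, Matrix.det_one, mul_one, aeval_algebraMap_apply,
    coe_aeval_eq_eval]

open MvPolynomial

theorem degree_dvd_dim_of_clifford_rep_general (k : Type*) [Field k] [Infinite k]
    (d : ℕ) (hd : 1 ≤ d)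
    (f : MvPolynomial (Fin 2) k) (hf : f.IsHomogeneous d)
    (hsf : Squarefree (MvPolynomial.map (algebraMap k (AlgebraicClosure k)) f))
    (F : Type*) [Field F] [Algebra k F]
    (m : ℕ)
    (αu αv : Matrix (Fin m) (Fin m) F)
    (hrel : ∀ a b : k,
      (algebraMap k F a • αu + algebraMap k F b • αv) ^ d =
        algebraMap k F (eval ![a, b] f) • (1 : Matrix (Fin m) (Fin m) F)) :
    d ∣ m := by
  obtain rfl | hd₂ := hd.eq_or_lt
  · exact one_dvd m
  set p := aeval ![(Polynomial.X : k[X]), 1] f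
  have hp_pos : 0 < p.natDegree := by
    have := natDegree_aeval_X_one_pos (hf.map (algebraMap k (AlgebraicClosure k))) hsf hd₂
    rwa [← map_aeval_X_one _ hf, natDegree_map] at this
  have hdet := det_X_smul_add_pow_eq αu αv p fun a => by
    simpa [p, eval_aeval_X_one] using hrel a 1
  rw [Fintype.card_fin] at hdet
  refine dvd_of_pow_eq_pow_of_squarefree (separable_aeval_X_one hf hsf).map.squarefree ?_ hdet
  exact Polynomial.not_isUnit_of_natDegree_pos _ (by rwa [natDegree_map])

/-- (Haile–Tesser) If `f` is a nondegenerate binary form of degree `d ≥ 1` over an infinite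
field `k`, then the dimension of any representation of the Clifford algebra `C_f` is
divisible by `d`: if matrices `α_u, α_v ∈ M_m(F)` satisfy the Clifford relations
`(a•α_u + b•α_v)^d = f(a,b)•1` for all `a, b ∈ k`, then `d ∣ m`. -/
theorem degree_dvd_dim_of_clifford_rep (k : Type*) [Field k] [Infinite k]
    (d : ℕ) (hd : 1 ≤ d)
    (f : MvPolynomial (Fin 2) k) (hf : f.IsHomogeneous d)
    (hsf : Squarefree (MvPolynomial.map (algebraMap k (AlgebraicClosure k)) f))
    (F : Type*) [Field F] [Algebra k F]
    (m : ℕ) (hm : 1 ≤ m)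
    (αu αv : Matrix (Fin m) (Fin m) F)
    (hrel : ∀ a b : k,
      (algebraMap k F a • αu + algebraMap k F b • αv) ^ d =
        algebraMap k F (eval ![a, b] f) • (1 : Matrix (Fin m) (Fin m) F)) :
    d ∣ m :=
  degree_dvd_dim_of_clifford_rep_general k d hd f hf hsf F m αu αv hrel
end

section
/- Let R be a commutative ring and let A be an associative unital R-algebra that is finitely generated as an R-module. Let (a_i)_{i ∈ I} be a family of elements of A such that for every maximal ideal m of R, the images of the a_i in A/mA generate A/mA as an algebra over the residue field R/m. Then the a_i generate A as an R-algebra, i.e. the R-subalgebra of A generated by {a_i : i ∈ I} is all of A. -/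
/-!
Let `S` be the `R`-submodule underlying the subalgebra generated by the `a i`. The hypothesis says
`S + mA = A` for every maximal ideal `m`, so the finite module `A / S` satisfies `m (A / S) = A / S`
for all `m`. By Nakayama's determinant trick some `r ≡ 1 (mod m)` kills `A / S`; if `A / S ≠ 0`,
taking `m` to contain its annihilator gives `1 ∈ m`, a contradiction.
-/

namespace Module

variable {R M : Type*} [CommRing R] [AddCommGroup M] [Module R M] [Module.Finite R M]

theorem subsingleton_of_forall_isMaximal_smul_top_eq_top
    (h : ∀ m : Ideal R, m.IsMaximal → m • (⊤ : Submodule R M) = ⊤) : Subsingleton M := by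
  rw [← annihilator_eq_top_iff (R := R)]
  by_contra hne
  obtain ⟨m, hm, hle⟩ := Ideal.exists_le_maximal _ hne
  obtain ⟨r, hr_sub_one, hr_smul⟩ :=
    Submodule.exists_sub_one_mem_and_smul_eq_zero_of_fg_of_le_smul m ⊤ Finite.fg_top (h m hm).ge
  have hr : r ∈ m := hle (mem_annihilator.mpr fun x => hr_smul x trivial)
  exact hm.ne_top ((Ideal.eq_top_iff_one m).2 (by simpa using m.sub_mem hr hr_sub_one))

end Module

namespace Submodule

variable {R M : Type*} [CommRing R] [AddCommGroup M] [Module R M] [Module.Finite R M]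

theorem eq_top_of_forall_isMaximal_sup_smul_top_eq_top (N : Submodule R M)
    (h : ∀ m : Ideal R, m.IsMaximal → N ⊔ m • (⊤ : Submodule R M) = ⊤) : N = ⊤ := by
  rw [← Quotient.subsingleton_iff]
  refine Module.subsingleton_of_forall_isMaximal_smul_top_eq_top (R := R) fun m hm => ?_
  have hmap := (map_mkQ_eq_top N _).2 (h m hm)
  rwa [map_smul'', map_top, range_mkQ] at hmap

end Submodule

/-- Let `A` be an associative unital algebra over a commutative ring `R`, finitely
generated as an `R`-module. If a family `(a i)` of elements of `A` generates `A / mA`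
as an algebra over `R/m` for every maximal ideal `m` of `R` (i.e. every element of `A`
is congruent modulo the two-sided ideal `mA = m • ⊤` to an element of the `R`-subalgebra
generated by the `a i`), then the `a i` generate `A` as an `R`-algebra. -/
theorem adjoin_eq_top_of_generate_mod_all_maximal
    (R : Type*) [CommRing R] (A : Type*) [Ring A] [Algebra R A] [Module.Finite R A]
    {ι : Type*} (a : ι → A)
    (h : ∀ m : Ideal R, m.IsMaximal → ∀ x : A,
      ∃ y ∈ Algebra.adjoin R (Set.range a), x - y ∈ (m • (⊤ : Submodule R A))) :
    Algebra.adjoin R (Set.range a) = ⊤ := by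
  rw [← Algebra.toSubmodule_eq_top]
  refine Submodule.eq_top_of_forall_isMaximal_sup_smul_top_eq_top _ fun m hm => ?_
  refine eq_top_iff.2 fun x _ => ?_
  obtain ⟨y, hy, hxy⟩ := h m hm x
  rw [← add_sub_cancel y x]
  exact Submodule.add_mem_sup hy hxy
end

section
/- Let R be a commutative local ring with maximal ideal m and let A be an associative unital R-algebra that is finitely generated as an R-module. Let (a_i)_{i ∈ I} be a family of elements of A whose images in A/mA generate A/mA as an algebra over the residue field R/m. Then the a_i generate A as an R-algebra. -/
theorem Submodule.sup_eq_top_of_forall_exists_sub_mem {R M : Type*} [Ring R] [AddCommGroup M]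
    [Module R M] {N P : Submodule R M} (h : ∀ x : M, ∃ y ∈ N, x - y ∈ P) : N ⊔ P = ⊤ := by
  refine eq_top_iff'.2 fun x => ?_
  obtain ⟨y, hy, hxy⟩ := h x
  simpa using add_mem (mem_sup_left hy) (mem_sup_right hxy)

theorem IsLocalRing.eq_top_of_forall_exists_sub_mem_maximalIdeal_smul {R M : Type*} [CommRing R]
    [IsLocalRing R] [AddCommGroup M] [Module R M] [Module.Finite R M] {N : Submodule R M}
    (h : ∀ x : M, ∃ y ∈ N, x - y ∈ maximalIdeal R • (⊤ : Submodule R M)) : N = ⊤ := by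
  rw [← IsLocalRing.map_mkQ_eq_top, Submodule.map_mkQ_eq_top, sup_comm]
  exact Submodule.sup_eq_top_of_forall_exists_sub_mem h

/-- (Nakayama step) Let `R` be a commutative local ring with maximal ideal `m`, and `A`
an associative unital `R`-algebra that is finitely generated as an `R`-module. If the
images of a family `(a i)` of elements of `A` generate `A / mA` as an algebra over the
residue field `R/m` (i.e. every element of `A` is congruent modulo the two-sided ideal
`mA = m • ⊤` to an element of the `R`-subalgebra generated by the `a i`), then the
`a i` generate `A` as an `R`-algebra. -/
theorem adjoin_eq_top_of_generate_mod_maximalIdeal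
    (R : Type*) [CommRing R] [IsLocalRing R]
    (A : Type*) [Ring A] [Algebra R A] [Module.Finite R A]
    {ι : Type*} (a : ι → A)
    (h : ∀ x : A, ∃ y ∈ Algebra.adjoin R (Set.range a),
      x - y ∈ (IsLocalRing.maximalIdeal R • (⊤ : Submodule R A))) :
    Algebra.adjoin R (Set.range a) = ⊤ :=
  Algebra.toSubmodule_eq_top.1 (IsLocalRing.eq_top_of_forall_exists_sub_mem_maximalIdeal_smul h)
end

section
/- Let K be a field, let f ∈ K[u,v] be a nonzero homogeneous polynomial of degree d ≥ 1, let r ≥ 1, and set n = rd. Let α_u, α_v ∈ M_n(K) be matrices such that the matrix W = u•ᾱ_u + v•ᾱ_v ∈ M_n(K[u,v]) satisfies W^d = f•1 (where ᾱ_u, ᾱ_v are the entrywise images of α_u, α_v in M_n(K[u,v]) and f is viewed in K[u,v]). Then there exists c ∈ K with c^d = 1 such that det W = c • f^r in K[u,v]. -/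
/-! Taking determinants of `W ^ d = f • 1` gives `(det W) ^ d = (f ^ r) ^ d`. In the UFD
`K[u,v]` this forces `det W` to be associated to `f ^ r`, and the units of `K[u,v]` are the
nonzero constants; comparing `d`-th powers again shows that the constant is a `d`-th root of
unity. -/

open MvPolynomial

theorem associated_of_pow_eq_pow {R : Type*} [CommMonoidWithZero R]
    [UniqueFactorizationMonoid R] {a b : R} {n : ℕ} (hn : n ≠ 0) (h : a ^ n = b ^ n) :
    Associated a b :=
  associated_of_dvd_dvd
    ((UniqueFactorizationMonoid.pow_dvd_pow_iff_dvd hn).1 (h ▸ dvd_rfl))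
    ((UniqueFactorizationMonoid.pow_dvd_pow_iff_dvd hn).1 (h ▸ dvd_rfl))

theorem MvPolynomial.exists_eq_smul_of_associated {σ K : Type*} [Field K]
    {p q : MvPolynomial σ K} (h : Associated p q) : ∃ c : K, q = c • p := by
  obtain ⟨u, rfl⟩ := h
  obtain ⟨c, -, hc⟩ := (isUnit_iff_eq_C_of_isReduced (P := (u : MvPolynomial σ K))).1 u.isUnit
  exact ⟨c, by rw [hc, smul_eq_C_mul, mul_comm]⟩

theorem det_pencil_of_clifford_relations_general
    (K : Type*) [Field K] (d r : ℕ) (hd : 1 ≤ d)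
    (f : MvPolynomial (Fin 2) K) (hf0 : f ≠ 0)
    (W : Matrix (Fin (r * d)) (Fin (r * d)) (MvPolynomial (Fin 2) K))
    (hrel : W ^ d = f • (1 : Matrix (Fin (r * d)) (Fin (r * d)) (MvPolynomial (Fin 2) K))) :
    ∃ c : K, c ^ d = 1 ∧ W.det = c • f ^ r := by
  have hd0 : d ≠ 0 := by omega
  have hdet : W.det ^ d = (f ^ r) ^ d := by
    rw [← Matrix.det_pow, hrel, Matrix.det_smul, Matrix.det_one, mul_one, Fintype.card_fin,
      ← pow_mul, mul_comm]
  obtain ⟨c, hc⟩ := exists_eq_smul_of_associated (associated_of_pow_eq_pow hd0 hdet.symm)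
  refine ⟨c, smul_left_injective K (pow_ne_zero d (pow_ne_zero r hf0)) ?_, hc⟩
  simpa only [hc, smul_pow, one_smul] using hdet

/-- If `f` is a nonzero binary form of degree `d ≥ 1` over a field `K`, `n = r * d`, and
the matrix pencil `W = u•ᾱ_u + v•ᾱ_v ∈ M_n(K[u,v])` satisfies `W ^ d = f • 1`, then
`det W = c • f ^ r` for some `d`-th root of unity `c ∈ K`. -/
theorem det_pencil_of_clifford_relations
    (K : Type*) [Field K] (d r : ℕ) (hd : 1 ≤ d) (hr : 1 ≤ r)
    (f : MvPolynomial (Fin 2) K) (hf0 : f ≠ 0) (hf : f.IsHomogeneous d)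
    (αu αv : Matrix (Fin (r * d)) (Fin (r * d)) K)
    (W : Matrix (Fin (r * d)) (Fin (r * d)) (MvPolynomial (Fin 2) K))
    (hW : W = (X 0 : MvPolynomial (Fin 2) K) • αu.map MvPolynomial.C +
        (X 1 : MvPolynomial (Fin 2) K) • αv.map MvPolynomial.C)
    (hrel : W ^ d = f • (1 : Matrix (Fin (r * d)) (Fin (r * d)) (MvPolynomial (Fin 2) K))) :
    ∃ c : K, c ^ d = 1 ∧ W.det = c • f ^ r :=
  det_pencil_of_clifford_relations_general K d r hd f hf0 W hrel
end

section
/- Let K be an algebraically closed field whose characteristic does not divide d, let f ∈ K[u,v] be a squarefree binary form of degree d (no repeated linear factors), let r ≥ 1, and let α_u, α_v ∈ M_{rd}(K) satisfy the Clifford relations (a•α_u + b•α_v)^d = f(a,b)•1 for all a, b ∈ K. Then for every (a,b) ∈ K² with (a,b) ≠ (0,0) and f(a,b) = 0, the matrix a•α_u + b•α_v is nilpotent with (a•α_u + b•α_v)^d = 0, and the dimension of its kernel is at most r. -/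
/-!
Put `α = a • αu + b • αv` and, for a direction `(a', b')` with `a' b - a b' = 1`,
`β = a' • αu + b' • αv`. The Clifford relation gives `(α + t β) ^ d = g(t) • 1` with
`g(t) = f(a + a' t, b + b' t)`, hence `det (α + t β) ^ d = g(t) ^ (r d)`. As `f` is homogeneous
and squarefree, `t ^ 2 ∤ g`: otherwise the linear form `b X₀ - a X₁` would divide `f` twice.
So `det (α + t β)` vanishes to order at most `r` at `t = 0`. On the other hand, in a basis
extending one of `ker α`, `dim ker α` columns of `α + t β` are divisible by `t`, so
`t ^ dim ker α` divides this determinant.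
-/

open scoped Polynomial

namespace MvPolynomial

section CommSemiring

variable {R : Type*} [CommSemiring R]

noncomputable def restrictToLine (f : MvPolynomial (Fin 2) R) (a b a' b' : R) : R[X] :=
  aeval ![Polynomial.C a' * Polynomial.X + Polynomial.C a,
    Polynomial.C b' * Polynomial.X + Polynomial.C b] f

lemma eval_restrictToLine (f : MvPolynomial (Fin 2) R) (a b a' b' t : R) :
    (restrictToLine f a b a' b').eval t = eval ![a' * t + a, b' * t + b] f := by
  rw [restrictToLine, ← Polynomial.coe_aeval_eq_eval, comp_aeval_apply, ← aeval_eq_eval]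
  congr 2
  funext i
  fin_cases i <;> simp

lemma IsHomogeneous.natDegree_aeval_X_one_le {n : ℕ} {F : MvPolynomial (Fin 2) R}
    (hF : F.IsHomogeneous n) :
    (MvPolynomial.aeval ![(Polynomial.X : R[X]), 1] F).natDegree ≤ n := by
  rw [F.as_sum, map_sum]
  refine Polynomial.natDegree_sum_le_of_forall_le _ _ fun m hm => ?_
  have hm : m 0 + m 1 = n := by
    simpa [Finsupp.weight_apply, Finsupp.sum_fintype, Fin.sum_univ_two] using
      hF (mem_support_iff.mp hm)
  rw [aeval_monomial, Finsupp.prod_fintype _ _ fun _ => pow_zero _, Fin.prod_univ_two]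
  simp only [Matrix.cons_val_zero, Matrix.cons_val_one, one_pow, mul_one,
    ← Polynomial.C_eq_algebraMap]
  exact (Polynomial.natDegree_C_mul_X_pow_le _ _).trans (by omega)

end CommSemiring

variable {R : Type*} [CommRing R] [IsDomain R]

lemma IsHomogeneous.X_zero_pow_dvd_of_X_pow_dvd_aeval {n k : ℕ} {F : MvPolynomial (Fin 2) R}
    (hF : F.IsHomogeneous n)
    (h : Polynomial.X ^ k ∣ MvPolynomial.aeval ![(Polynomial.X : R[X]), 1] F) :
    X 0 ^ k ∣ F := by
  set p := MvPolynomial.aeval ![(Polynomial.X : R[X]), 1] F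
  have hp : p.natDegree ≤ n := hF.natDegree_aeval_X_one_le
  have hdvd := Polynomial.homogenize_dvd h
  rw [Polynomial.natDegree_X_pow, Polynomial.homogenize_X_pow le_rfl, Nat.sub_self, pow_zero,
    mul_one] at hdvd
  have hsplit : p.homogenize n = p.homogenize p.natDegree * X 1 ^ (n - p.natDegree) := by
    simpa [Nat.add_sub_of_le hp] using
      Polynomial.homogenize_mul p 1 le_rfl (n := n - p.natDegree) (by simp)
  rw [← Polynomial.homogenize_eq_of_isHomogeneous hF rfl, hsplit]
  exact hdvd.mul_right _

lemma IsHomogeneous.not_X_sq_dvd_restrictToLine {d : ℕ} {f : MvPolynomial (Fin 2) R}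
    (hf : f.IsHomogeneous d) (hsf : Squarefree f) {a b a' b' : R} (hD : a' * b - a * b' = 1) :
    ¬ Polynomial.X ^ 2 ∣ restrictToLine f a b a' b' := by
  intro h
  -- `σ` carries the line `t ↦ (a + a' t, b + b' t)` to the chart `![X, 1]`; `τ` inverts it and
  -- `τ (X 0) = b X₀ - a X₁` is the linear form vanishing at `(a, b)`.
  set σ : Fin 2 → MvPolynomial (Fin 2) R := ![C a' * X 0 + C a * X 1, C b' * X 0 + C b * X 1]
  set τ : MvPolynomial (Fin 2) R →ₐ[R] MvPolynomial (Fin 2) R :=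
    MvPolynomial.aeval ![C b * X 0 - C a * X 1, C a' * X 1 - C b' * X 0]
  have hσ : (MvPolynomial.aeval σ f).IsHomogeneous d := by
    rw [← one_mul d]
    refine hf.aeval σ fun i => ?_
    fin_cases i <;> exact ((isHomogeneous_X R _).C_mul _).add ((isHomogeneous_X R _).C_mul _)
  have hline : MvPolynomial.aeval ![(Polynomial.X : R[X]), 1] (MvPolynomial.aeval σ f) =
      restrictToLine f a b a' b' := by
    rw [restrictToLine, comp_aeval_apply]
    congr 2
    funext i
    fin_cases i <;> simp [σ, Polynomial.C_eq_algebraMap]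
  have hτσ : τ (MvPolynomial.aeval σ f) = f := by
    rw [comp_aeval_apply]
    conv_rhs => rw [← aeval_X_left_apply f]
    congr 2
    funext i
    have hD' : C a' * C b - C a * C b' = (1 : MvPolynomial (Fin 2) R) := by
      simp only [← MvPolynomial.C_mul, ← C_sub, hD, C_1]
    fin_cases i
    · simp only [σ, τ, aeval_eq_bind₁, Fin.isValue, Fin.zero_eta, Matrix.cons_val_zero,
        map_add, map_mul, algHom_C, algebraMap_eq, bind₁_X_right, Matrix.cons_val_one,
        Matrix.cons_val_fin_one]
      linear_combination X 0 * hD'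
    · simp only [σ, τ, aeval_eq_bind₁, Fin.isValue, Fin.mk_one, Matrix.cons_val_one,
        Matrix.cons_val_fin_one, map_add, map_mul, algHom_C, algebraMap_eq, bind₁_X_right,
        Matrix.cons_val_zero]
      linear_combination X 1 * hD'
  have hsq : τ (X 0) * τ (X 0) ∣ f := by
    rw [← hτσ, ← sq, ← map_pow]
    exact map_dvd τ (hσ.X_zero_pow_dvd_of_X_pow_dvd_aeval (hline ▸ h))
  have hunit := (hsf _ hsq).map (MvPolynomial.eval ![a, b])
  simp [τ, mul_comm] at hunit

end MvPolynomial

namespace Matrix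

open Polynomial

variable {n : Type*}

noncomputable def pencil {R : Type*} [CommSemiring R] (A B : Matrix n n R) : Matrix n n R[X] :=
  A.map C + (X : R[X]) • B.map C

variable [Fintype n] [DecidableEq n]

lemma _root_.Submodule.exists_isUnit_matrix_col_mem {K : Type*} [Field K]
    (W : Submodule K (n → K)) :
    ∃ (P : Matrix n n K) (S : Finset n),
      IsUnit P ∧ S.card = Module.finrank K W ∧ ∀ j ∈ S, P.col j ∈ W := by
  obtain ⟨W', hW⟩ := W.exists_isCompl
  let b := ((Module.finBasis K W).prod (Module.finBasis K W')).map
    (Submodule.prodEquivOfIsCompl W W' hW)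
  let e := b.indexEquiv (Pi.basisFun K n)
  refine ⟨of fun i j => b (e.symm j) i,
    Finset.univ.map (Function.Embedding.inl.trans e.toEmbedding), ?_, ?_, ?_⟩
  · rw [← linearIndependent_cols_iff_isUnit]
    exact b.linearIndependent.comp _ e.symm.injective
  · simp
  · intro j hj
    obtain ⟨i, -, rfl⟩ := Finset.mem_map.mp hj
    convert (Module.finBasis K W i).2
    ext
    simp [col, b]


lemma pow_card_dvd_det_of_dvd_col {R : Type*} [CommRing R] (x : R) (S : Finset n)
    (A : Matrix n n R) (h : ∀ j ∈ S, ∀ i, x ∣ A i j) : x ^ S.card ∣ A.det := by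
  choose! c hc using h
  have hA : A = (of fun i j => if j ∈ S then c j i else A i j) *
      diagonal fun j => if j ∈ S then x else 1 := by
    ext i j
    by_cases hj : j ∈ S
    · simp [hj, hc j hj i, mul_comm]
    · simp [hj]
  rw [hA, det_mul, det_diagonal, Finset.prod_ite_mem, Finset.univ_inter, Finset.prod_const]
  exact dvd_mul_left _ _

lemma pencil_pow_eq_smul_one_of_forall_eval {R : Type*} [CommRing R] [IsDomain R] [Infinite R]
    {A B : Matrix n n R} {d : ℕ} {g : R[X]} (h : ∀ t : R, (A + t • B) ^ d = g.eval t • 1) :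
    pencil A B ^ d = g • 1 := by
  refine Matrix.ext fun i j => Polynomial.funext fun t => ?_
  have hM : (evalRingHom t).mapMatrix (pencil A B) = A + t • B := by
    ext
    simp only [pencil, RingHom.mapMatrix_apply, coe_evalRingHom, map_apply, add_apply,
      smul_apply, smul_eq_mul, X_mul_C, eval_add, eval_C, eval_mul, eval_X]
    ring
  have := congrFun (congrFun (h t) i) j
  rw [← hM, ← map_pow] at this
  simpa [one_apply, apply_ite] using this

variable {K : Type*} [Field K]

lemma X_pow_finrank_ker_dvd_det_pencil (A B : Matrix n n K) :
    X ^ Module.finrank K (LinearMap.ker A.mulVecLin) ∣ (pencil A B).det := by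
  obtain ⟨P, S, hP, hS, hcol⟩ := (LinearMap.ker A.mulVecLin).exists_isUnit_matrix_col_mem
  have hAP : ∀ j ∈ S, ∀ i, (A * P) i j = 0 := fun j hj i => by
    simpa [mulVec, dotProduct, mul_apply, col] using congrFun (hcol j hj) i
  have hMP : pencil A B * P.map C = (A * P).map C + (X : K[X]) • (B * P).map C := by
    simp [pencil, add_mul, Matrix.map_mul]
  have hdvd : X ^ S.card ∣ (pencil A B * P.map C).det := by
    refine pow_card_dvd_det_of_dvd_col _ _ _ fun j hj i => ?_
    rw [hMP, add_apply, map_apply, hAP j hj i, map_zero, zero_add, smul_apply, smul_eq_mul]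
    exact dvd_mul_right _ _
  have hPdet : (P.map C).det = C P.det := (C.map_det P).symm
  rwa [det_mul, hS, hPdet, ((isUnit_iff_isUnit_det P).mp hP |>.map C).dvd_mul_right] at hdvd

lemma finrank_ker_le_of_pencil_pow_eq_smul_one {r d : ℕ} (hn : Fintype.card n = r * d)
    {A B : Matrix n n K} {g : K[X]} (hg : ¬ X ^ 2 ∣ g) (h : pencil A B ^ d = g • 1) :
    Module.finrank K (LinearMap.ker A.mulVecLin) ≤ r := by
  classical
  obtain rfl | hd := eq_or_ne d 0
  · have := (LinearMap.ker A.mulVecLin).finrank_le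
    rw [Module.finrank_fintype_fun_eq_card, hn, mul_zero] at this
    omega
  set k := Module.finrank K (LinearMap.ker A.mulVecLin)
  have hg0 : g ≠ 0 := by rintro rfl; exact hg (dvd_zero _)
  have hdvd : X ^ (k * d) ∣ g ^ (r * d) := by
    rw [pow_mul, ← hn, ← mul_one (g ^ _), ← det_one (n := n), ← det_smul, ← h, det_pow]
    exact pow_dvd_pow_of_dvd (X_pow_finrank_ker_dvd_det_pencil A B) d
  have hmult : g.rootMultiplicity 0 ≤ 1 :=
    (rootMultiplicity_le_iff hg0 0 1).2 (by simpa using hg)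
  have hkd := (le_rootMultiplicity_iff (pow_ne_zero (r * d) hg0) (a := 0)).2
    (by simpa using hdvd)
  rw [← count_roots, roots_pow, Multiset.count_nsmul, count_roots] at hkd
  refine Nat.le_of_mul_le_mul_right ?_ (Nat.pos_of_ne_zero hd)
  nlinarith

end Matrix

open MvPolynomial

theorem nilpotent_and_kernel_le_of_clifford_rep_general
    (K : Type*) [Field K] [IsAlgClosed K]
    (d r : ℕ)
    (f : MvPolynomial (Fin 2) K) (hf : f.IsHomogeneous d) (hsf : Squarefree f)
    (αu αv : Matrix (Fin (r * d)) (Fin (r * d)) K)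
    (hrel : ∀ a b : K,
      (a • αu + b • αv) ^ d =
        eval ![a, b] f • (1 : Matrix (Fin (r * d)) (Fin (r * d)) K)) :
    ∀ a b : K, ¬ (a = 0 ∧ b = 0) → eval ![a, b] f = 0 →
      IsNilpotent (a • αu + b • αv) ∧ (a • αu + b • αv) ^ d = 0 ∧
      Module.finrank K (LinearMap.ker ((a • αu + b • αv).mulVecLin)) ≤ r := by
  intro a b hab hfab
  have hpow : (a • αu + b • αv) ^ d = 0 := by rw [hrel, hfab, zero_smul]
  refine ⟨⟨d, hpow⟩, hpow, ?_⟩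
  obtain ⟨a', b', hD⟩ : ∃ a' b' : K, a' * b - a * b' = 1 := by
    by_cases hb : b = 0
    · have ha : a ≠ 0 := fun ha => hab ⟨ha, hb⟩
      exact ⟨0, -a⁻¹, by simp [hb, ha]⟩
    · exact ⟨b⁻¹, 0, by simp [hb]⟩
  refine Matrix.finrank_ker_le_of_pencil_pow_eq_smul_one (Fintype.card_fin _)
    (B := a' • αu + b' • αv) (hf.not_X_sq_dvd_restrictToLine hsf hD)
    (Matrix.pencil_pow_eq_smul_one_of_forall_eval fun t => ?_)
  rw [eval_restrictToLine, ← hrel]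
  congr 1
  module

/-- For an `rd`-dimensional representation of the Clifford algebra of a squarefree binary
form `f` of degree `d` over an algebraically closed field `K` with `char K ∤ d`: at every
`(a,b) ≠ (0,0)` with `f(a,b) = 0`, the matrix `a•α_u + b•α_v` is nilpotent with `d`-th
power zero, and its kernel has dimension at most `r`. -/
theorem nilpotent_and_kernel_le_of_clifford_rep
    (K : Type*) [Field K] [IsAlgClosed K]
    (d r : ℕ) (hr : 1 ≤ r) (hchar : (d : K) ≠ 0)
    (f : MvPolynomial (Fin 2) K) (hf : f.IsHomogeneous d) (hsf : Squarefree f)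
    (αu αv : Matrix (Fin (r * d)) (Fin (r * d)) K)
    (hrel : ∀ a b : K,
      (a • αu + b • αv) ^ d =
        eval ![a, b] f • (1 : Matrix (Fin (r * d)) (Fin (r * d)) K)) :
    ∀ a b : K, ¬ (a = 0 ∧ b = 0) → eval ![a, b] f = 0 →
      IsNilpotent (a • αu + b • αv) ∧ (a • αu + b • αv) ^ d = 0 ∧
      Module.finrank K (LinearMap.ker ((a • αu + b • αv).mulVecLin)) ≤ r :=
  nilpotent_and_kernel_le_of_clifford_rep_general K d r f hf hsf αu αv hrel
end

section
/- Let K be an algebraically closed field whose characteristic does not divide d, let f ∈ K[u,v] be a squarefree binary form of degree d (no repeated linear factors), let r ≥ 1, and let α_u, α_v ∈ M_{rd}(K) satisfy the Clifford relations (a•α_u + b•α_v)^d = f(a,b)•1 for all a, b ∈ K. Then for every (a,b) ∈ K², the characteristic polynomial of the matrix a•α_u + b•α_v equals (X^d − f(a,b))^r. -/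
/-!
Over `R = K[u,v]` consider the generic pencil `N = u • α_u + v • α_v`; since `K` is infinite, the
Clifford relations say exactly that `N ^ d = f • 1`. Because `f` is squarefree and not a unit,
`X ^ d - f` is Eisenstein at any prime factor of `f`, hence irreducible over `R` and, by Gauss's
lemma, over `Frac R`. There every irreducible factor of the characteristic polynomial of `N` has a
root in the spectrum of `N`, so it divides the minimal polynomial and hence `X ^ d - f`. Thus
`charpoly N` is a power of `X ^ d - f`, and comparing degrees gives the exponent `r`. Specializing
`(u, v) ↦ (a, b)` gives the theorem.
-/

namespace Polynomial

variable {R : Type*} [CommRing R] [IsDomain R]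

theorem irreducible_X_pow_sub_C_of_prime_dvd {π c : R} (hπ : Prime π) (hπc : π ∣ c)
    (hπc2 : ¬ π ^ 2 ∣ c) {d : ℕ} (hd : d ≠ 0) : Irreducible (X ^ d - C c : R[X]) := by
  have hmonic : (X ^ d - C c : R[X]).Monic := monic_X_pow_sub_C c hd
  have hspan : (Ideal.span {π}).IsPrime := (Ideal.span_singleton_prime hπ.ne_zero).mpr hπ
  refine IsEisensteinAt.irreducible (𝓟 := Ideal.span {π}) ?_ hspan hmonic.isPrimitive
    (by rw [natDegree_X_pow_sub_C]; omega)
  refine hmonic.isEisensteinAt_of_mem_of_notMem hspan.ne_top (fun {n} hn => ?_) ?_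
  · rw [natDegree_X_pow_sub_C] at hn
    rcases Nat.eq_zero_or_pos n with rfl | hn0
    · simpa [coeff_X_pow, hd.symm, Ideal.mem_span_singleton] using hπc
    · simp [coeff_X_pow, hn.ne, coeff_C, hn0.ne']
  · simpa [coeff_X_pow, hd.symm, Ideal.span_singleton_pow, Ideal.mem_span_singleton] using hπc2

theorem irreducible_X_pow_sub_C_of_squarefree [UniqueFactorizationMonoid R] {c : R}
    (hc : Squarefree c) (hcu : ¬ IsUnit c) {d : ℕ} (hd : d ≠ 0) :
    Irreducible (X ^ d - C c : R[X]) := by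
  obtain ⟨π, hπ, hπc⟩ := WfDvdMonoid.exists_irreducible_factor hcu hc.ne_zero
  refine irreducible_X_pow_sub_C_of_prime_dvd hπ.prime hπc (fun h => hπ.not_isUnit ?_) hd
  exact hc π (by simpa [sq] using h)

end Polynomial

theorem MvPolynomial.IsHomogeneous.not_isUnit_s11 {σ R : Type*} [CommRing R] [Nontrivial R]
    {f : MvPolynomial σ R} {d : ℕ} (hf : f.IsHomogeneous d) (hd : d ≠ 0) : ¬ IsUnit f := by
  intro hu
  have h0 : f.coeff 0 = 0 := hf.coeff_eq_zero (by simpa using hd.symm)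
  exact not_isUnit_zero (h0 ▸ (isUnit_iff.mp hu).1)

namespace Matrix

variable {n : Type*} [Fintype n] [DecidableEq n]

section Charpoly

open Polynomial UniqueFactorizationMonoid

section Field

variable {K : Type*} [Field K]

theorem dvd_minpoly_of_dvd_charpoly {M : Matrix n n K} {p : K[X]} (hp : Irreducible p)
    (hpM : p ∣ M.charpoly) : p ∣ minpoly K M := by
  have := Fact.mk hp
  set L := AdjoinRoot p
  set M' : Matrix n n L := M.map (algebraMap K L)
  have hspec : AdjoinRoot.root p ∈ spectrum L M' := by
    rw [mem_spectrum_iff_isRoot_charpoly, charpoly_map, IsRoot, eval_map, ← aeval_def]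
    exact aeval_eq_zero_of_dvd_aeval_eq_zero hpM (by rw [AdjoinRoot.aeval_eq, AdjoinRoot.mk_self])
  have : Nontrivial (Matrix n n L) := by
    by_contra h
    rw [not_nontrivial_iff_subsingleton] at h
    simp [spectrum.of_subsingleton] at hspec
  have hM' : aeval M' (minpoly K M) = 0 := by
    have : M' = (Algebra.ofId K L).mapMatrix M := rfl
    rw [this, aeval_algHom_apply, minpoly.aeval, map_zero]
  -- spectral mapping: `g '' σ M' ⊆ σ (g M') = σ 0` for `g` the minimal polynomial of `M`
  have hroot : aeval (AdjoinRoot.root p) (minpoly K M) = 0 := by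
    have := spectrum.subset_polynomial_aeval M' ((minpoly K M).map (algebraMap K L))
      ⟨_, hspec, rfl⟩
    beta_reduce at this
    rwa [aeval_map_algebraMap, hM', spectrum.zero_eq, Set.mem_singleton_iff, eval_map,
      ← aeval_def] at this
  have := minpoly.dvd K _ hroot
  rwa [AdjoinRoot.minpoly_root hp.ne_zero, IsUnit.mul_right_dvd] at this
  exact isUnit_C.mpr (leadingCoeff_ne_zero.mpr hp.ne_zero).isUnit.inv

theorem exists_charpoly_eq_pow_of_aeval_eq_zero {M : Matrix n n K} {Q : K[X]}
    (hQ : Irreducible Q) (hQm : Q.Monic) (hMQ : aeval M Q = 0) : ∃ e, M.charpoly = Q ^ e := by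
  classical
  have hfactors : ∀ {q}, q ∈ normalizedFactors M.charpoly → q = Q := by
    intro q hq
    have hqirr := irreducible_of_normalized_factor q hq
    have hqmonic : q.Monic := by
      rw [← normalize_normalized_factor q hq]
      exact monic_normalize hqirr.ne_zero
    refine eq_of_monic_of_associated hqmonic hQm <| hqirr.associated_of_dvd hQ ?_
    exact (dvd_minpoly_of_dvd_charpoly hqirr (dvd_of_mem_normalizedFactors hq)).trans
      (minpoly.dvd K M hMQ)
  obtain ⟨e, he⟩ :=
    exists_associated_prime_pow_of_unique_normalized_factor hfactors M.charpoly_monic.ne_zero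
  exact ⟨e, eq_of_monic_of_associated M.charpoly_monic (hQm.pow e) he.symm⟩

theorem charpoly_eq_X_pow_sub_C_pow {d r : ℕ} (hd : d ≠ 0) (hn : Fintype.card n = r * d)
    {M : Matrix n n K} {c : K} (hM : M ^ d = c • 1) (hirr : Irreducible (X ^ d - C c)) :
    M.charpoly = (X ^ d - C c) ^ r := by
  have hmonic := monic_X_pow_sub_C c hd
  obtain ⟨e, he⟩ := exists_charpoly_eq_pow_of_aeval_eq_zero (M := M) hirr hmonic
    (by rw [map_sub, map_pow, aeval_X, aeval_C, hM, Algebra.algebraMap_eq_smul_one, sub_self])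
  have hdeg := M.charpoly_natDegree_eq_dim
  rw [he, hmonic.natDegree_pow, natDegree_X_pow_sub_C, hn] at hdeg
  rw [he, Nat.eq_of_mul_eq_mul_right (Nat.pos_of_ne_zero hd) hdeg]

end Field

theorem charpoly_eq_X_pow_sub_C_pow_of_isIntegrallyClosed {R : Type*} [CommRing R] [IsDomain R]
    [IsIntegrallyClosed R] {d r : ℕ} (hd : d ≠ 0) (hn : Fintype.card n = r * d)
    {M : Matrix n n R} {c : R} (hM : M ^ d = c • 1) (hirr : Irreducible (X ^ d - C c)) :
    M.charpoly = (X ^ d - C c) ^ r := by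
  let F := FractionRing R
  have hmap : (M.map (algebraMap R F)) ^ d = algebraMap R F c • 1 := by
    rw [← RingHom.mapMatrix_apply, ← map_pow, hM, smul_one_eq_diagonal, RingHom.mapMatrix_apply,
      diagonal_map (map_zero _), ← smul_one_eq_diagonal]
  have hirrF : Irreducible (X ^ d - C (algebraMap R F c)) := by
    simpa using
      ((monic_X_pow_sub_C c hd).irreducible_iff_irreducible_map_fraction_map (K := F)).mp hirr
  apply Polynomial.map_injective _ (IsFractionRing.injective R F)
  rw [← charpoly_map, charpoly_eq_X_pow_sub_C_pow hd hn hmap hirrF]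
  simp

end Charpoly

section GenericPencil

open MvPolynomial

variable {R : Type*} [CommRing R]

noncomputable def genericPencil (A B : Matrix n n R) : Matrix n n (MvPolynomial (Fin 2) R) :=
  (X 0 : MvPolynomial (Fin 2) R) • A.map C + (X 1 : MvPolynomial (Fin 2) R) • B.map C

theorem mapMatrix_eval_genericPencil (A B : Matrix n n R) (x : Fin 2 → R) :
    (eval x).mapMatrix (genericPencil A B) = x 0 • A + x 1 • B := by
  ext i j
  simp [genericPencil]

theorem genericPencil_pow_eq_smul_one [IsDomain R] [Infinite R] {A B : Matrix n n R} {d : ℕ}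
    {f : MvPolynomial (Fin 2) R} (h : ∀ a b : R, (a • A + b • B) ^ d = eval ![a, b] f • 1) :
    genericPencil A B ^ d = f • 1 := by
  refine Matrix.ext fun i j => MvPolynomial.funext fun x => ?_
  have hx : ![x 0, x 1] = x := by ext k; fin_cases k <;> rfl
  have hij := congrArg (· i j) (h (x 0) (x 1))
  rw [← mapMatrix_eval_genericPencil, ← map_pow, hx] at hij
  simpa [one_apply, apply_ite] using hij

end GenericPencil

end Matrix

open MvPolynomial

theorem charpoly_of_clifford_rep_general
    (K : Type*) [Field K] [IsAlgClosed K]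
    (d r : ℕ) (hchar : (d : K) ≠ 0)
    (f : MvPolynomial (Fin 2) K) (hf : f.IsHomogeneous d) (hsf : Squarefree f)
    (αu αv : Matrix (Fin (r * d)) (Fin (r * d)) K)
    (hrel : ∀ a b : K,
      (a • αu + b • αv) ^ d =
        eval ![a, b] f • (1 : Matrix (Fin (r * d)) (Fin (r * d)) K)) :
    ∀ a b : K,
      (a • αu + b • αv).charpoly =
        (Polynomial.X ^ d - Polynomial.C (eval ![a, b] f)) ^ r := by
  have hd : d ≠ 0 := by
    rintro rfl
    exact hchar Nat.cast_zero
  have hgeneric :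
      (Matrix.genericPencil αu αv).charpoly = (Polynomial.X ^ d - Polynomial.C f) ^ r :=
    Matrix.charpoly_eq_X_pow_sub_C_pow_of_isIntegrallyClosed hd (Fintype.card_fin _)
      (Matrix.genericPencil_pow_eq_smul_one hrel)
      (Polynomial.irreducible_X_pow_sub_C_of_squarefree hsf (hf.not_isUnit_s11 hd) hd)
  intro a b
  have hspec := congrArg (Polynomial.map (eval ![a, b])) hgeneric
  rw [← Matrix.charpoly_map, ← RingHom.mapMatrix_apply, Matrix.mapMatrix_eval_genericPencil]
    at hspec
  simpa using hspec

/-- For an `rd`-dimensional representation of the Clifford algebra of a squarefree binary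
form `f` of degree `d` over an algebraically closed field `K` with `char K ∤ d`: for all
`(a,b) ∈ K²`, the characteristic polynomial of `a•α_u + b•α_v` is `(X^d - f(a,b))^r`. -/
theorem charpoly_of_clifford_rep
    (K : Type*) [Field K] [IsAlgClosed K]
    (d r : ℕ) (hr : 1 ≤ r) (hchar : (d : K) ≠ 0)
    (f : MvPolynomial (Fin 2) K) (hf : f.IsHomogeneous d) (hsf : Squarefree f)
    (αu αv : Matrix (Fin (r * d)) (Fin (r * d)) K)
    (hrel : ∀ a b : K,
      (a • αu + b • αv) ^ d =
        eval ![a, b] f • (1 : Matrix (Fin (r * d)) (Fin (r * d)) K)) :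
    ∀ a b : K,
      (a • αu + b • αv).charpoly =
        (Polynomial.X ^ d - Polynomial.C (eval ![a, b] f)) ^ r :=
  charpoly_of_clifford_rep_general K d r hchar f hf hsf αu αv hrel
end
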